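/- arXiv:1810.06354 — 2 statements merged into one kernel-verified Lean document; each statement's English description precedes it below -/
import Mathlib

section
/- For the cycle C_m with m ≥ 3: if m = 2k+1 then the independence number of the pair graph C(C_m) equals k(k+1) + ⌊(k+1)/2⌋, and if m = 2k then it equals k(k+1). -/
/-! Write a vertex `{x, y}` of `C(C_m)` as a chord `{i, i + d}` of the `m`-gon, where
`d ≤ ⌊m/2⌋ =: k` is the circular distance of its endpoints. Along an edge of `C(C_m)` the length
changes by one, except between two chords of length `k` when `m = 2k + 1`. Hence the chords of
even length `< k` form an independent set, to which the `k` disjoint chords `{i, i + k}`, `i < k`,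
can be added when `k` is even. Conversely, the two chords `{i, i + 2b}` and `{i, i + 2b + 1}` are
adjacent, so an independent set meets each length block `{2b, 2b + 1}` in at most `m` chords; and
two chords of length `k` with a common endpoint are equal or adjacent, so an independent set
contains at most `k` of them, which bounds the last block when `k` is even. -/

/-- The independence number of a graph: the supremum of sizes of independent sets. -/
noncomputable def indepNum {V : Type*} (G : SimpleGraph V) : ℕ :=
  sSup {n | ∃ s : Finset V, s.card = n ∧ ∀ a ∈ s, ∀ b ∈ s, ¬ G.Adj a b}

/-- The path graph on `n` vertices `0, 1, ..., n-1`. -/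
def pathG (n : ℕ) : SimpleGraph (Fin n) :=
  SimpleGraph.fromRel (fun i j => (i : ℕ) + 1 = (j : ℕ))

/-- The cycle graph on `n` vertices `0, 1, ..., n-1`. -/
def cycleG (n : ℕ) : SimpleGraph (Fin n) :=
  SimpleGraph.fromRel (fun i j => (i : ℕ) + 1 = (j : ℕ) ∨ ((i : ℕ) = 0 ∧ (j : ℕ) = n - 1))

/-- The join of a graph `G` with a single extra vertex. -/
def joinK1 {V : Type*} (G : SimpleGraph V) : SimpleGraph (V ⊕ Unit) :=
  SimpleGraph.fromRel (fun a b =>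
    (∃ x y, G.Adj x y ∧ a = Sum.inl x ∧ b = Sum.inl y) ∨ (a.isLeft ∧ b.isRight))

/-- The fan graph `F_{m,1} = P_m + K_1`. -/
def fanG (m : ℕ) : SimpleGraph (Fin m ⊕ Unit) := joinK1 (pathG m)

/-- The wheel graph `W_{m,1} = C_m + K_1`. -/
def wheelG (m : ℕ) : SimpleGraph (Fin m ⊕ Unit) := joinK1 (cycleG m)

/-- The `k`-token graph: vertices are `k`-subsets of `V(G)`, two subsets adjacent
whenever their symmetric difference is an edge of `G`. -/
def tokenGraph {V : Type*} [DecidableEq V] (k : ℕ) (G : SimpleGraph V) :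
    SimpleGraph {A : Finset V // A.card = k} :=
  SimpleGraph.fromRel (fun A B => ∃ a b : V, G.Adj a b ∧ symmDiff A.1 B.1 = {a, b})

/-- The double vertex graph `G^(2)`: the `2`-token graph of `G`. -/
def doubleVertexGraph {V : Type*} [DecidableEq V] (G : SimpleGraph V) :
    SimpleGraph {A : Finset V // A.card = 2} :=
  tokenGraph 2 G

/-- The pair graph (complete double vertex graph) `C(G)`: vertices are the 2-multisets
of `V(G)`; `{a,x}` and `{a,y}` (distinct) are adjacent iff `x` and `y` are adjacent in `G`. -/
def pairGraph {V : Type*} (G : SimpleGraph V) : SimpleGraph (Sym2 V) :=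
  SimpleGraph.fromRel (fun s t => ∃ a x y : V, G.Adj x y ∧ s = s(a, x) ∧ t = s(a, y))

open Finset Fin.NatCast

theorem indepNum_eq_indepNum {V : Type*} (G : SimpleGraph V) : indepNum G = G.indepNum := by
  unfold indepNum SimpleGraph.indepNum
  congr 1
  ext n
  constructor
  · rintro ⟨s, rfl, hs⟩
    exact ⟨s, ⟨fun a ha b hb _ => hs a ha b hb, rfl⟩⟩
  · rintro ⟨s, hs, rfl⟩
    exact ⟨s, rfl, fun a ha b hb hab => hs ha hb (G.ne_of_adj hab) hab⟩

theorem Sym2.two_mul_card_le_of_pairwiseDisjoint {α : Type*} [Fintype α] [DecidableEq α]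
    {S : Finset (Sym2 α)} (hdiag : ∀ v ∈ S, ¬ v.IsDiag)
    (hS : (S : Set (Sym2 α)).PairwiseDisjoint Sym2.toFinset) :
    2 * #S ≤ Fintype.card α :=
  calc 2 * #S = ∑ v ∈ S, #v.toFinset := by
        rw [sum_congr rfl fun v hv => Sym2.card_toFinset_of_not_isDiag v (hdiag v hv), sum_const,
          smul_eq_mul, mul_comm]
    _ = #(S.biUnion Sym2.toFinset) := (card_biUnion hS).symm
    _ ≤ Fintype.card α := card_le_univ _

theorem isIndepSet_pairGraph_of_pairwiseDisjoint {V : Type*} [DecidableEq V] (G : SimpleGraph V)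
    {S : Set (Sym2 V)} (hS : S.PairwiseDisjoint Sym2.toFinset) : (pairGraph G).IsIndepSet S := by
  intro v hv w hw hne hadj
  obtain ⟨a, x, y, -, rfl, rfl⟩ | ⟨a, x, y, -, rfl, rfl⟩ := hadj.2 <;>
    exact disjoint_left.mp (hS hv hw hne) (Sym2.mem_toFinset.2 (Sym2.mem_mk_left a _))
      (Sym2.mem_toFinset.2 (Sym2.mem_mk_left a _))

theorem Fin.val_add_natCast {m : ℕ} [NeZero m] (i : Fin m) {d : ℕ} (hd : d < m) :
    (i + d).val = if m ≤ i.val + d then i.val + d - m else i.val + d := by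
  rw [Fin.val_add_eq_ite, Fin.val_natCast, Nat.mod_eq_of_lt hd]

theorem cycleG_adj_add_one {m : ℕ} [NeZero m] (hm : 2 ≤ m) (x : Fin m) :
    (cycleG m).Adj x (x + 1) := by
  have := x.isLt
  have h := Fin.val_add_natCast x (d := 1) hm
  rw [Nat.cast_one] at h
  simp only [cycleG, SimpleGraph.fromRel_adj, ne_eq, Fin.ext_iff]
  split_ifs at h <;> omega

namespace PairGraphCycle

variable {m : ℕ}

def chord [NeZero m] (i : Fin m) (d : ℕ) : Sym2 (Fin m) := s(i, i + d)

def length : Sym2 (Fin m) → ℕ :=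
  Sym2.lift ⟨fun x y => min (Nat.dist x y) (m - Nat.dist x y), fun x y => by
    dsimp only
    rw [Nat.dist_comm]⟩

-- The endpoint from which the other one lies `length v` steps ahead, the smaller one for a
-- diameter; so a vertex is `chord i d` for exactly one pair with `2 * d < m ∨ 2 * d = m ∧ i < d`.
def base : Sym2 (Fin m) → Fin m :=
  Sym2.lift ⟨fun x y => if x.val ≤ y.val then (if 2 * (y.val - x.val) ≤ m then x else y)
    else (if 2 * (x.val - y.val) ≤ m then y else x), fun x y => by
      dsimp only
      split_ifs <;> first | rfl | exact Fin.ext (by omega)⟩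

theorem length_mk (x y : Fin m) : length s(x, y) = min (Nat.dist x y) (m - Nat.dist x y) := rfl

theorem base_mk (x y : Fin m) : base s(x, y) = if x.val ≤ y.val then
    (if 2 * (y.val - x.val) ≤ m then x else y) else (if 2 * (x.val - y.val) ≤ m then y else x) :=
  rfl

theorem length_chord [NeZero m] (i : Fin m) {d : ℕ} (hd : 2 * d ≤ m) : length (chord i d) = d := by
  have := i.isLt
  rw [chord, length_mk, Fin.val_add_natCast i (by omega), Nat.dist]
  split_ifs <;> omega

theorem base_chord [NeZero m] {i : Fin m} {d : ℕ} (h : 2 * d < m ∨ 2 * d = m ∧ i.val < d) :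
    base (chord i d) = i := by
  have := i.isLt
  have hv := Fin.val_add_natCast i (d := d) (by omega)
  rw [chord, base_mk]
  split_ifs at hv ⊢ <;> first | rfl | exact Fin.ext (by omega)

theorem exists_chord_eq [NeZero m] (v : Sym2 (Fin m)) :
    ∃ i d, (2 * d < m ∨ 2 * d = m ∧ i.val < d) ∧ chord i d = v := by
  refine Sym2.inductionOn v fun x y => ?_
  wlog hxy : x.val ≤ y.val generalizing x y
  · rw [Sym2.eq_swap]; exact this y x (by omega)
  have := y.isLt
  by_cases h : 2 * (y.val - x.val) ≤ m
  · refine ⟨x, y.val - x.val, by omega, ?_⟩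
    rw [chord]
    congr 1
    apply Fin.ext
    rw [Fin.val_add_natCast x (by omega)]
    split_ifs <;> omega
  · refine ⟨y, m - (y.val - x.val), by omega, ?_⟩
    rw [chord, Sym2.eq_swap]
    congr 1
    apply Fin.ext
    rw [Fin.val_add_natCast y (by omega)]
    split_ifs <;> omega

theorem chord_base_length [NeZero m] (v : Sym2 (Fin m)) : chord (base v) (length v) = v := by
  obtain ⟨i, d, h, rfl⟩ := exists_chord_eq v
  rw [base_chord h, length_chord i (by omega)]

theorem two_mul_length_le [NeZero m] (v : Sym2 (Fin m)) : 2 * length v ≤ m := by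
  obtain ⟨i, d, h, rfl⟩ := exists_chord_eq v
  rw [length_chord i (by omega)]
  omega

theorem adj_chord_chord_add_one [NeZero m] (hm : 2 ≤ m) (i : Fin m) (d : ℕ) :
    (pairGraph (cycleG m)).Adj (chord i d) (chord i (d + 1)) := by
  have h := cycleG_adj_add_one hm (i + d)
  rw [chord, chord, Nat.cast_succ, ← add_assoc]
  exact ⟨fun he => h.ne (Sym2.congr_right.1 he), Or.inl ⟨i, _, _, h, rfl, rfl⟩⟩

theorem length_eq_of_adj {v w : Sym2 (Fin m)} (h : (pairGraph (cycleG m)).Adj v w) :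
    length w = length v + 1 ∨ length v = length w + 1 ∨
      (length v = length w ∧ m = 2 * length v + 1) := by
  obtain ⟨a, x, y, hxy, rfl, rfl⟩ | ⟨a, x, y, hxy, rfl, rfl⟩ := h.2 <;>
  · simp only [cycleG, SimpleGraph.fromRel_adj, ne_eq, Fin.ext_iff] at hxy
    have := a.isLt
    simp only [length_mk, Nat.dist]
    omega

theorem eq_or_adj_of_mem_of_mem {v w : Sym2 (Fin m)} {a : Fin m} (hv : m ≤ 2 * length v + 1)
    (hvw : length v = length w) (hav : a ∈ v) (haw : a ∈ w) :
    v = w ∨ (pairGraph (cycleG m)).Adj v w := by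
  obtain ⟨y, rfl⟩ := Sym2.mem_iff_exists.1 hav
  obtain ⟨z, rfl⟩ := Sym2.mem_iff_exists.1 haw
  by_cases hyz : y = z
  · exact Or.inl (hyz ▸ rfl)
  refine Or.inr ⟨fun he => hyz (Sym2.congr_right.1 he), Or.inl ⟨a, y, z, ?_, rfl, rfl⟩⟩
  have := a.isLt; have := y.isLt; have := z.isLt
  simp only [length_mk, Nat.dist] at hv hvw
  simp only [cycleG, SimpleGraph.fromRel_adj, ne_eq, Fin.ext_iff] at hyz ⊢
  omega

theorem injOn_base_length_div_two [NeZero m] (hm : 2 ≤ m) {S : Set (Sym2 (Fin m))}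
    (hS : (pairGraph (cycleG m)).IsIndepSet S) :
    S.InjOn fun v => (base v, length v / 2) := by
  have no_step : ∀ ⦃v⦄, v ∈ S → ∀ ⦃w⦄, w ∈ S → base v = base w → length w ≠ length v + 1 := by
    intro v hv w hw hb hl
    refine hS hv hw (fun h => by subst h; omega) ?_
    rw [← chord_base_length v, ← chord_base_length w, hb, hl]
    exact adj_chord_chord_add_one hm _ _
  intro v hv w hw h
  obtain ⟨hb, hl⟩ := Prod.mk.inj h
  rcases lt_trichotomy (length v) (length w) with hlt | heq | hlt
  · exact absurd (by omega) (no_step hv hw hb)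
  · rw [← chord_base_length v, ← chord_base_length w, hb, heq]
  · exact absurd (by omega) (no_step hw hv hb.symm)

theorem card_filter_length_eq_half_le [NeZero m] (hm : 2 ≤ m) {S : Finset (Sym2 (Fin m))}
    (hS : (pairGraph (cycleG m)).IsIndepSet S) : #{v ∈ S | length v = m / 2} ≤ m / 2 := by
  set T := {v ∈ S | length v = m / 2}
  have hT : ∀ v ∈ T, v ∈ S ∧ length v = m / 2 := fun v hv => mem_filter.1 hv
  suffices 2 * #T ≤ Fintype.card (Fin m) by rw [Fintype.card_fin] at this; omega
  refine Sym2.two_mul_card_le_of_pairwiseDisjoint (fun v hv hdiag => ?_) ?_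
  · have := (hT v hv).2
    rw [← Sym2.diag_diagElem hdiag, Sym2.diag, length_mk, Nat.dist_self] at this
    omega
  · intro v hv w hw hne
    refine disjoint_left.2 fun a hav haw => ?_
    obtain ⟨hvS, hv⟩ := hT v hv
    obtain ⟨hwS, hw⟩ := hT w hw
    rcases eq_or_adj_of_mem_of_mem (by omega) (hv.trans hw.symm) (Sym2.mem_toFinset.1 hav)
      (Sym2.mem_toFinset.1 haw) with h | h
    · exact hne h
    · exact hS hvS hwS hne h

theorem card_le_of_isIndepSet [NeZero m] (hm : 2 ≤ m) {S : Finset (Sym2 (Fin m))}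
    (hS : (pairGraph (cycleG m)).IsIndepSet S) :
    #S ≤ (m / 2 + 1) / 2 * m + if Even (m / 2) then m / 2 else 0 := by
  rw [← card_filter_add_card_filter_not (fun v => length v / 2 < (m / 2 + 1) / 2)]
  gcongr ?_ + ?_
  · calc #{v ∈ S | length v / 2 < (m / 2 + 1) / 2}
        ≤ #(univ ×ˢ range ((m / 2 + 1) / 2) : Finset (Fin m × ℕ)) := by
          refine card_le_card_of_injOn _ (fun v hv => ?_)
            ((injOn_base_length_div_two hm hS).mono (coe_subset.2 (filter_subset _ _)))
          simpa using (mem_filter.1 hv).2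
      _ = (m / 2 + 1) / 2 * m := by simp [mul_comm]
  · split_ifs with hk
    · refine (card_le_card fun v hv => ?_).trans (card_filter_length_eq_half_le hm hS)
      rw [Nat.even_iff] at hk
      rw [mem_filter] at hv ⊢
      exact ⟨hv.1, by have := two_mul_length_le v; omega⟩
    · rw [Nat.not_even_iff_odd, Nat.odd_iff] at hk
      rw [Nat.le_zero, card_eq_zero, filter_eq_empty_iff]
      intro v _
      have := two_mul_length_le v
      omega

theorem chord_eq_chord_iff [NeZero m] {i j : Fin m} {d e : ℕ}
    (hi : 2 * d < m ∨ 2 * d = m ∧ i.val < d) (hj : 2 * e < m ∨ 2 * e = m ∧ j.val < e) :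
    chord i d = chord j e ↔ i = j ∧ d = e := by
  refine ⟨fun h => ⟨?_, ?_⟩, fun ⟨hij, hde⟩ => hij ▸ hde ▸ rfl⟩
  · rw [← base_chord hi, h, base_chord hj]
  · rw [← length_chord i (by omega : 2 * d ≤ m), h, length_chord j (by omega)]

theorem isIndepSet_of_forall_even_length {S : Set (Sym2 (Fin m))}
    (heven : ∀ v ∈ S, Even (length v))
    (htop : (pairGraph (cycleG m)).IsIndepSet {v ∈ S | 2 * length v + 1 = m}) :
    (pairGraph (cycleG m)).IsIndepSet S := by
  intro v hv w hw hne hadj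
  have hv' := Nat.even_iff.1 (heven v hv)
  have hw' := Nat.even_iff.1 (heven w hw)
  rcases length_eq_of_adj hadj with h | h | ⟨h, hm⟩
  · omega
  · omega
  · exact htop ⟨hv, hm.symm⟩ ⟨hw, by omega⟩ hne hadj

def evenRows (m : ℕ) [NeZero m] : Finset (Sym2 (Fin m)) :=
  (univ ×ˢ range ((m / 2 + 1) / 2)).image fun p => chord p.1 (2 * p.2)

def halfChords (m : ℕ) [NeZero m] : Finset (Sym2 (Fin m)) :=
  ({i | i.val < m / 2} : Finset (Fin m)).image fun i => chord i (m / 2)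

theorem length_of_mem_evenRows [NeZero m] {v : Sym2 (Fin m)} (hv : v ∈ evenRows m) :
    Even (length v) ∧ length v < m / 2 := by
  obtain ⟨⟨i, b⟩, hb, rfl⟩ := mem_image.1 hv
  simp only [mem_product, mem_univ, mem_range, true_and] at hb
  rw [length_chord i (by omega)]
  exact ⟨even_two_mul b, by omega⟩

theorem card_evenRows [NeZero m] : #(evenRows m) = (m / 2 + 1) / 2 * m := by
  rw [evenRows, card_image_of_injOn, card_product, card_univ, Fintype.card_fin, card_range,
    mul_comm]
  rintro ⟨i, b⟩ hb ⟨j, c⟩ hc h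
  have hb := mem_range.1 (mem_product.1 hb).2
  have hc := mem_range.1 (mem_product.1 hc).2
  obtain ⟨rfl, hbc⟩ := (chord_eq_chord_iff (Or.inl (by omega)) (Or.inl (by omega))).1 h
  simp only at hbc ⊢
  rw [Nat.mul_left_cancel two_pos hbc]

theorem length_of_mem_halfChords [NeZero m] {v : Sym2 (Fin m)} (hv : v ∈ halfChords m) :
    length v = m / 2 := by
  obtain ⟨i, -, rfl⟩ := mem_image.1 hv
  exact length_chord i (by omega)

theorem card_halfChords [NeZero m] : #(halfChords m) = m / 2 := by
  rw [halfChords, card_image_of_injOn, Fin.card_filter_val_lt]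
  · omega
  intro i hi j hj h
  have hi := (mem_filter.1 hi).2
  have hj := (mem_filter.1 hj).2
  exact ((chord_eq_chord_iff (by omega) (by omega)).1 h).1

theorem isIndepSet_halfChords [NeZero m] : (pairGraph (cycleG m)).IsIndepSet (halfChords m) := by
  refine isIndepSet_pairGraph_of_pairwiseDisjoint _ fun v hv w hw hne => ?_
  obtain ⟨i, hi, rfl⟩ := mem_image.1 hv
  obtain ⟨j, hj, rfl⟩ := mem_image.1 hw
  simp only [mem_filter, mem_univ, true_and] at hi hj
  have hi' := Fin.val_add_natCast i (d := m / 2) (by omega)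
  have hj' := Fin.val_add_natCast j (d := m / 2) (by omega)
  rw [if_neg (by omega)] at hi' hj'
  refine disjoint_left.2 fun a ha hb => hne ?_
  simp only [chord, Sym2.mem_toFinset, Sym2.mem_iff, Fin.ext_iff, hi', hj'] at ha hb
  rw [show i = j by ext; omega]

theorem isIndepSet_evenRows [NeZero m] : (pairGraph (cycleG m)).IsIndepSet (evenRows m) :=
  isIndepSet_of_forall_even_length (fun v hv => (length_of_mem_evenRows hv).1)
    fun v ⟨hv, hm⟩ => by have := (length_of_mem_evenRows hv).2; omega

theorem isIndepSet_evenRows_union_halfChords [NeZero m] (hk : Even (m / 2)) :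
    (pairGraph (cycleG m)).IsIndepSet ↑(evenRows m ∪ halfChords m) := by
  refine isIndepSet_of_forall_even_length (fun v hv => ?_) (isIndepSet_halfChords.mono ?_)
  · rcases mem_union.1 hv with hv | hv
    · exact (length_of_mem_evenRows hv).1
    · exact length_of_mem_halfChords hv ▸ hk
  · rintro v ⟨hv, hm⟩
    rcases mem_union.1 hv with hv | hv
    · have := (length_of_mem_evenRows hv).2
      omega
    · exact hv

theorem exists_isIndepSet_card_eq [NeZero m] :
    ∃ S : Finset (Sym2 (Fin m)), (pairGraph (cycleG m)).IsIndepSet S ∧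
      #S = (m / 2 + 1) / 2 * m + if Even (m / 2) then m / 2 else 0 := by
  split_ifs with hk
  · have hdisj : Disjoint (evenRows m) (halfChords m) := disjoint_left.2 fun v hv hv' =>
      (length_of_mem_evenRows hv).2.ne (length_of_mem_halfChords hv')
    exact ⟨_, isIndepSet_evenRows_union_halfChords hk,
      by rw [card_union_of_disjoint hdisj, card_evenRows, card_halfChords]⟩
  · exact ⟨_, isIndepSet_evenRows, by rw [card_evenRows, add_zero]⟩

theorem indepNum_pairGraph_cycleG (hm : 2 ≤ m) :
    indepNum (pairGraph (cycleG m)) = (m / 2 + 1) / 2 * m + if Even (m / 2) then m / 2 else 0 := by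
  have : NeZero m := ⟨by omega⟩
  rw [indepNum_eq_indepNum]
  refine le_antisymm ?_ ?_
  · obtain ⟨S, hS⟩ := (pairGraph (cycleG m)).exists_isNIndepSet_indepNum
    exact hS.card_eq ▸ card_le_of_isIndepSet hm hS.isIndepSet
  · obtain ⟨S, hS, hcard⟩ := exists_isIndepSet_card_eq (m := m)
    exact hcard ▸ hS.card_le_indepNum

end PairGraphCycle

/-- For the cycle `C_m` with `m ≥ 3`: if `m = 2k+1` then `α(C(C_m)) = k(k+1) + ⌊(k+1)/2⌋`,
and if `m = 2k` then `α(C(C_m)) = k(k+1)`. -/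
theorem indepNum_pairGraph_cycle (m k : ℕ) (hm : 3 ≤ m) :
    (m = 2 * k + 1 → indepNum (pairGraph (cycleG m)) = k * (k + 1) + (k + 1) / 2) ∧
    (m = 2 * k → indepNum (pairGraph (cycleG m)) = k * (k + 1)) := by
  refine ⟨fun hmk => ?_, fun hmk => ?_⟩ <;> subst hmk <;>
    rw [PairGraphCycle.indepNum_pairGraph_cycleG (by omega)] <;>
    obtain ⟨j, rfl | rfl⟩ := Nat.even_or_odd' k
  all_goals
    simp only [show ∀ a, (2 * a + 1) / 2 = a by omega, show ∀ a, 2 * a / 2 = a by omega,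
      show ∀ a, (2 * a + 1 + 1) / 2 = a + 1 by omega, even_two_mul, Nat.not_even_two_mul_add_one,
      if_true, if_false]
    ring
end

section
/- Let m ≥ 4, T_m the double vertex graph of P_m, and R_i = {{i,j} : j ≠ i}. If S ⊆ {1,…,m} is nonempty and contains no two consecutive integers, then α(T_m − ∪_{i∈S} R_i) ≤ ⌊(m−1)²/4⌋; moreover if |S| ≥ 2 this inequality is strict. -/
/-!
Sending a vertex `{a, b}` (`a < b`) of `T_m` to `(a, b)` identifies `T_m` with the part of the
square grid strictly above the diagonal, and deleting `R_c` deletes row `c` and column `c`.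
Covering by dominoes, a `p × q` rectangle holds at most `⌈pq/2⌉` independent points and the
staircase triangle of side `n` at most `⌊n²/4⌋`. Deleting row and column `c` from the triangle
of side `m` leaves triangles of sides `p`, `q` and a `p × q` rectangle, with `p + q = m - 1` and
`⌊p²/4⌋ + ⌊q²/4⌋ + ⌈pq/2⌉ = ⌊(m - 1)²/4⌋`. A second deleted index `j ≥ c + 2` falls into the upper
triangle, of side `q ≥ 2`, whose bound then drops to `⌊(q - 1)²/4⌋ < ⌊q²/4⌋`.
-/

open Finset

section IndepNumOn

variable {α β : Type*} (G : SimpleGraph α)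

open Classical in
noncomputable def indepNumOn (s : Finset α) : ℕ :=
  (s.powerset.filter fun J : Finset α => G.IsIndepSet (J : Set α)).sup card

variable {G}

theorem card_le_indepNumOn {s J : Finset α} (hJs : J ⊆ s) (hJ : G.IsIndepSet (J : Set α)) :
    #J ≤ indepNumOn G s := by
  classical
  exact le_sup (f := card) (mem_filter.mpr ⟨mem_powerset.mpr hJs, hJ⟩)

theorem indepNumOn_le {s : Finset α} {n : ℕ}
    (h : ∀ J ⊆ s, G.IsIndepSet (J : Set α) → #J ≤ n) : indepNumOn G s ≤ n := by
  classical
  refine Finset.sup_le fun J hJ => ?_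
  rw [mem_filter, mem_powerset] at hJ
  exact h J hJ.1 hJ.2

theorem indepNumOn_mono {s t : Finset α} (hst : s ⊆ t) : indepNumOn G s ≤ indepNumOn G t :=
  indepNumOn_le fun _ hJs hJ => card_le_indepNumOn (hJs.trans hst) hJ

theorem indepNumOn_union_le [DecidableEq α] (s t : Finset α) :
    indepNumOn G (s ∪ t) ≤ indepNumOn G s + indepNumOn G t := by
  refine indepNumOn_le fun J hJ hind => ?_
  rw [← card_inter_add_card_sdiff J s]
  gcongr
  · exact card_le_indepNumOn inter_subset_right (hind.mono (by simp))
  · refine card_le_indepNumOn (fun x hx => ?_) (hind.mono (by simp))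
    rw [mem_sdiff] at hx
    exact (mem_union.mp (hJ hx.1)).resolve_left hx.2

theorem indepNumOn_le_card_of_mapsTo {s : Finset α} {t : Finset β} (f : α → β)
    (hf : ∀ x ∈ s, f x ∈ t) (hfib : ∀ x ∈ s, ∀ y ∈ s, x ≠ y → f x = f y → G.Adj x y) :
    indepNumOn G s ≤ #t :=
  indepNumOn_le fun J hJs hJ =>
    card_le_card_of_injOn f (fun x hx => hf x (hJs hx)) fun x hx y hy hxy => by
      by_contra hne
      exact hJ hx hy hne (hfib x (hJs hx) y (hJs hy) hne hxy)

end IndepNumOn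

section Grid

open SimpleGraph

def gridGraph : SimpleGraph (ℕ × ℕ) := hasse ℕ □ hasse ℕ

theorem gridGraph_adj {x y : ℕ × ℕ} :
    gridGraph.Adj x y ↔
      (x.1 + 1 = y.1 ∨ y.1 + 1 = x.1) ∧ x.2 = y.2 ∨
        (x.2 + 1 = y.2 ∨ y.2 + 1 = x.2) ∧ x.1 = y.1 := by
  simp only [gridGraph, boxProd_adj, hasse_adj, Nat.covBy_iff_add_one_eq]

theorem indepNumOn_row_le (a c d : ℕ) :
    indepNumOn gridGraph ({a} ×ˢ Ico c d) ≤ (d - c + 1) / 2 := by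
  calc indepNumOn gridGraph ({a} ×ˢ Ico c d) ≤ #(range ((d - c + 1) / 2)) :=
        indepNumOn_le_card_of_mapsTo (fun x => (x.2 - c) / 2)
          (fun x hx => by
            simp only [mem_product, mem_singleton, mem_Ico] at hx
            rw [mem_range]
            omega)
          fun x hx y hy hne hxy => by
            simp only [mem_product, mem_singleton, mem_Ico] at hx hy
            rw [gridGraph_adj]
            have := Prod.ext_iff.not.mp hne
            omega
    _ = (d - c + 1) / 2 := card_range _

theorem indepNumOn_two_rows_le (a c d : ℕ) :
    indepNumOn gridGraph (Ico a (a + 2) ×ˢ Ico c d) ≤ d - c := by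
  calc indepNumOn gridGraph (Ico a (a + 2) ×ˢ Ico c d) ≤ #(Ico c d) :=
        indepNumOn_le_card_of_mapsTo Prod.snd (fun x hx => (mem_product.mp hx).2)
          fun x hx y hy hne hxy => by
            simp only [mem_product, mem_Ico] at hx hy
            rw [gridGraph_adj]
            have := Prod.ext_iff.not.mp hne
            omega
    _ = d - c := Nat.card_Ico c d

theorem indepNumOn_rect_le (a b c d : ℕ) :
    indepNumOn gridGraph (Ico a b ×ˢ Ico c d) ≤ ((b - a) * (d - c) + 1) / 2 := by
  induction hp : b - a using Nat.strong_induction_on generalizing a with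
  | _ p ih =>
    rcases p with _ | _ | p
    · simp [Ico_eq_empty_of_le (Nat.sub_eq_zero_iff_le.mp hp), indepNumOn]
    · rw [show b = a + 1 by omega, Nat.Ico_succ_singleton]
      simpa using indepNumOn_row_le a c d
    · have hsplit : Ico a b = Ico a (a + 2) ∪ Ico (a + 2) b :=
        (Ico_union_Ico_eq_Ico (by omega) (by omega)).symm
      calc indepNumOn gridGraph (Ico a b ×ˢ Ico c d)
          ≤ indepNumOn gridGraph (Ico a (a + 2) ×ˢ Ico c d) +
              indepNumOn gridGraph (Ico (a + 2) b ×ˢ Ico c d) := by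
            rw [hsplit, union_product]; exact indepNumOn_union_le _ _
        _ ≤ (d - c) + (p * (d - c) + 1) / 2 :=
            add_le_add (indepNumOn_two_rows_le a c d) (ih p (by omega) (a + 2) (by omega))
        _ = ((p + 2) * (d - c) + 1) / 2 := by ring_nf; omega

end Grid

theorem sq_div_four_add_sq_div_four (p q : ℕ) :
    p ^ 2 / 4 + q ^ 2 / 4 + (p * q + 1) / 2 = (p + q) ^ 2 / 4 := by
  rcases Nat.even_or_odd' p with ⟨a, rfl | rfl⟩ <;>
    rcases Nat.even_or_odd' q with ⟨b, rfl | rfl⟩ <;> ring_nf <;> omega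

theorem sq_div_four_lt_sq_div_four {q : ℕ} (hq : 2 ≤ q) : (q - 1) ^ 2 / 4 < q ^ 2 / 4 := by
  obtain ⟨_ | s, rfl⟩ := Nat.exists_eq_add_of_le' hq
  · norm_num
  · rw [show s + 1 + 2 - 1 = s + 2 by omega]
    ring_nf
    omega

def triangle (l k : ℕ) : Finset (ℕ × ℕ) := (Ico l k ×ˢ Ico l k).filter fun x => x.1 < x.2

def avoiding (c : ℕ) (s : Finset (ℕ × ℕ)) : Finset (ℕ × ℕ) :=
  s.filter fun x => x.1 ≠ c ∧ x.2 ≠ c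

theorem triangle_subset_row_union (l k : ℕ) :
    triangle l k ⊆ Ico l (l + 1) ×ˢ Ico (l + 1) k ∪ triangle (l + 1) k := by
  intro x
  simp only [triangle, mem_union, mem_filter, mem_product, mem_Ico]
  omega

theorem avoiding_triangle_subset_row_union (l c k : ℕ) :
    avoiding c (triangle l k) ⊆ triangle l c ∪ Ico l c ×ˢ Ico (c + 1) k ∪ triangle (c + 1) k := by
  intro x
  simp only [avoiding, triangle, mem_union, mem_filter, mem_product, mem_Ico]
  omega

theorem indepNumOn_triangle_le (l k : ℕ) :
    indepNumOn gridGraph (triangle l k) ≤ (k - l) ^ 2 / 4 := by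
  induction hn : k - l generalizing l with
  | zero =>
    have hempty : triangle l k = ∅ := by
      ext x
      simp only [triangle, mem_filter, mem_product, mem_Ico, notMem_empty, iff_false]
      omega
    rw [hempty]
    exact indepNumOn_le fun J hJ _ => by simp [subset_empty.mp hJ]
  | succ n ih =>
    calc indepNumOn gridGraph (triangle l k)
        ≤ indepNumOn gridGraph (Ico l (l + 1) ×ˢ Ico (l + 1) k) +
            indepNumOn gridGraph (triangle (l + 1) k) :=
          (indepNumOn_mono (triangle_subset_row_union l k)).trans (indepNumOn_union_le _ _)
      _ ≤ (n + 1) / 2 + n ^ 2 / 4 := by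
          gcongr
          · have := indepNumOn_rect_le l (l + 1) (l + 1) k
            rwa [show l + 1 - l = 1 by omega, show k - (l + 1) = n by omega, one_mul] at this
          · exact ih (l + 1) (by omega)
      _ = (n + 1) ^ 2 / 4 := by
          have := sq_div_four_add_sq_div_four 1 n
          rw [add_comm 1 n] at this
          norm_num at this
          omega

theorem indepNumOn_avoiding_triangle_le {l c k : ℕ} (hlc : l ≤ c) (hck : c < k) :
    indepNumOn gridGraph (avoiding c (triangle l k)) ≤ (k - l - 1) ^ 2 / 4 :=
  calc indepNumOn gridGraph (avoiding c (triangle l k))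
      ≤ indepNumOn gridGraph (triangle l c) + indepNumOn gridGraph (Ico l c ×ˢ Ico (c + 1) k) +
          indepNumOn gridGraph (triangle (c + 1) k) :=
        (indepNumOn_mono (avoiding_triangle_subset_row_union l c k)).trans <|
          (indepNumOn_union_le _ _).trans (by gcongr; exact indepNumOn_union_le _ _)
    _ ≤ (c - l) ^ 2 / 4 + ((c - l) * (k - (c + 1)) + 1) / 2 + (k - (c + 1)) ^ 2 / 4 := by
        gcongr
        exacts [indepNumOn_triangle_le l c, indepNumOn_rect_le l c (c + 1) k,
          indepNumOn_triangle_le (c + 1) k]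
    _ = (k - l - 1) ^ 2 / 4 := by
        rw [show k - l - 1 = (c - l) + (k - (c + 1)) by omega, ← sq_div_four_add_sq_div_four]
        ring

theorem avoiding_avoiding_triangle_subset_row_union (l i j k : ℕ) :
    avoiding j (avoiding i (triangle l k)) ⊆
      triangle l i ∪ Ico l i ×ˢ Ico (i + 1) k ∪ avoiding j (triangle (i + 1) k) := by
  intro x
  simp only [avoiding, triangle, mem_union, mem_filter, mem_product, mem_Ico]
  omega

theorem indepNumOn_avoiding_avoiding_triangle_lt {l i j k : ℕ} (hli : l ≤ i) (hij : i + 2 ≤ j)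
    (hjk : j < k) :
    indepNumOn gridGraph (avoiding j (avoiding i (triangle l k))) < (k - l - 1) ^ 2 / 4 :=
  calc indepNumOn gridGraph (avoiding j (avoiding i (triangle l k)))
      ≤ indepNumOn gridGraph (triangle l i) + indepNumOn gridGraph (Ico l i ×ˢ Ico (i + 1) k) +
          indepNumOn gridGraph (avoiding j (triangle (i + 1) k)) :=
        (indepNumOn_mono (avoiding_avoiding_triangle_subset_row_union l i j k)).trans <|
          (indepNumOn_union_le _ _).trans (by gcongr; exact indepNumOn_union_le _ _)
    _ ≤ (i - l) ^ 2 / 4 + ((i - l) * (k - (i + 1)) + 1) / 2 + (k - (i + 1) - 1) ^ 2 / 4 := by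
        gcongr
        exacts [indepNumOn_triangle_le l i, indepNumOn_rect_le l i (i + 1) k,
          indepNumOn_avoiding_triangle_le (by omega) hjk]
    _ < (i - l) ^ 2 / 4 + ((i - l) * (k - (i + 1)) + 1) / 2 + (k - (i + 1)) ^ 2 / 4 := by
        gcongr
        exact sq_div_four_lt_sq_div_four (by omega)
    _ = (k - l - 1) ^ 2 / 4 := by
        rw [show k - l - 1 = (i - l) + (k - (i + 1)) by omega, ← sq_div_four_add_sq_div_four]
        ring

theorem indepNum_le_of_forall {V : Type*} {G : SimpleGraph V} {n : ℕ}
    (h : ∀ s : Finset V, (∀ a ∈ s, ∀ b ∈ s, ¬G.Adj a b) → #s ≤ n) : indepNum G ≤ n :=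
  csSup_le ⟨0, ∅, by simp⟩ fun _ ⟨s, hs, hind⟩ => hs ▸ h s hind

theorem doubleVertexGraph_adj_of_eq_pair {V : Type*} [DecidableEq V] {G : SimpleGraph V}
    {u v : {A : Finset V // A.card = 2}} {a b c : V} (hab : a ≠ b) (hac : a ≠ c) (hbc : G.Adj b c)
    (hu : u.1 = {a, b}) (hv : v.1 = {a, c}) : (doubleVertexGraph G).Adj u v := by
  have hbc' : b ≠ c := hbc.ne
  rw [doubleVertexGraph, tokenGraph, SimpleGraph.fromRel_adj]
  refine ⟨fun huv => ?_, Or.inl ⟨b, c, hbc, ?_⟩⟩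
  · have : c ∈ u.1 := by simp [huv, hv]
    simp [hu, hac.symm, hbc'.symm] at this
  · ext x
    simp only [hu, hv, mem_symmDiff, mem_insert, mem_singleton]
    grind

theorem pathG_adj {m : ℕ} {i j : Fin m} :
    (pathG m).Adj i j ↔ (i : ℕ) + 1 = j ∨ (j : ℕ) + 1 = i := by
  rw [pathG, SimpleGraph.fromRel_adj, and_iff_right_iff_imp]
  rintro h rfl
  omega

section PairCoords

variable {m : ℕ}

def pairMin (A : {A : Finset (Fin m) // A.card = 2}) : Fin m :=
  A.1.min' (card_pos.mp (by rw [A.2]; norm_num))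

def pairMax (A : {A : Finset (Fin m) // A.card = 2}) : Fin m :=
  A.1.max' (card_pos.mp (by rw [A.2]; norm_num))

theorem pairMin_lt_pairMax (A : {A : Finset (Fin m) // A.card = 2}) : pairMin A < pairMax A :=
  min'_lt_max'_of_card A.1 (by rw [A.2]; norm_num)

theorem coe_eq_pairMin_pairMax (A : {A : Finset (Fin m) // A.card = 2}) :
    A.1 = {pairMin A, pairMax A} := by
  refine (eq_of_subset_of_card_le (fun x hx => ?_) ?_).symm
  · rw [mem_insert, mem_singleton] at hx
    rcases hx with rfl | rfl
    exacts [min'_mem _ _, max'_mem _ _]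
  · rw [A.2, card_pair (pairMin_lt_pairMax A).ne]

def pairCoords (A : {A : Finset (Fin m) // A.card = 2}) : ℕ × ℕ :=
  (pairMin A, pairMax A)

theorem pairCoords_injective : Function.Injective (pairCoords (m := m)) := by
  intro u v h
  simp only [pairCoords, Prod.mk.injEq, Fin.val_inj] at h
  exact Subtype.ext (by rw [coe_eq_pairMin_pairMax u, coe_eq_pairMin_pairMax v, h.1, h.2])

theorem pairCoords_mem_triangle (A : {A : Finset (Fin m) // A.card = 2}) :
    pairCoords A ∈ triangle 0 m := by
  simp only [triangle, pairCoords, mem_filter, mem_product, mem_Ico, zero_le, Fin.is_lt,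
    and_self, true_and]
  exact pairMin_lt_pairMax A

theorem pairCoords_mem_avoiding {A : {A : Finset (Fin m) // A.card = 2}} {c : Fin m}
    (hc : c ∉ A.1) {s : Finset (ℕ × ℕ)} (hs : pairCoords A ∈ s) :
    pairCoords A ∈ avoiding (c : ℕ) s := by
  rw [coe_eq_pairMin_pairMax A, mem_insert, mem_singleton, not_or] at hc
  simp only [avoiding, mem_filter, pairCoords, ne_eq, Fin.val_inj]
  exact ⟨hs, Ne.symm hc.1, Ne.symm hc.2⟩

theorem doubleVertexGraph_pathG_adj_of_gridGraph_adj {u v : {A : Finset (Fin m) // A.card = 2}}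
    (h : gridGraph.Adj (pairCoords u) (pairCoords v)) : (doubleVertexGraph (pathG m)).Adj u v := by
  have hu := pairMin_lt_pairMax u
  have hv := pairMin_lt_pairMax v
  rw [gridGraph_adj] at h
  simp only [pairCoords] at h
  rcases h with ⟨hmin, hmax⟩ | ⟨hmax, hmin⟩
  · rw [Fin.val_inj] at hmax
    exact doubleVertexGraph_adj_of_eq_pair hu.ne' (hmax ▸ hv.ne') (pathG_adj.mpr hmin)
      ((coe_eq_pairMin_pairMax u).trans (pair_comm _ _))
      ((coe_eq_pairMin_pairMax v).trans (by rw [pair_comm, hmax]))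
  · rw [Fin.val_inj] at hmin
    exact doubleVertexGraph_adj_of_eq_pair hu.ne (hmin ▸ hv.ne) (pathG_adj.mpr hmax)
      (coe_eq_pairMin_pairMax u) ((coe_eq_pairMin_pairMax v).trans (by rw [hmin]))

theorem indepNum_induce_le_indepNumOn {W : Set {A : Finset (Fin m) // A.card = 2}}
    {s : Finset (ℕ × ℕ)} (hW : ∀ A ∈ W, pairCoords A ∈ s) :
    indepNum ((doubleVertexGraph (pathG m)).induce W) ≤ indepNumOn gridGraph s := by
  refine indepNum_le_of_forall fun I hI => ?_
  have hinj : Function.Injective (pairCoords ∘ Subtype.val : W → ℕ × ℕ) :=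
    pairCoords_injective.comp Subtype.val_injective
  rw [← card_image_of_injective I hinj]
  refine card_le_indepNumOn (fun x hx => ?_) fun x hx y hy _ hxy => ?_
  · obtain ⟨A, -, rfl⟩ := mem_image.mp hx
    exact hW A A.2
  · obtain ⟨A, hA, rfl⟩ := mem_image.mp (mem_coe.mp hx)
    obtain ⟨B, hB, rfl⟩ := mem_image.mp (mem_coe.mp hy)
    exact hI A hA B hB
      (SimpleGraph.induce_adj.mpr (doubleVertexGraph_pathG_adj_of_gridGraph_adj hxy))

end PairCoords

theorem indepNum_Tm_delete_RS_general (m : ℕ) (S : Finset (Fin m))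
    (hS : S.Nonempty) (hcons : ∀ i ∈ S, ∀ j ∈ S, (i : ℕ) + 1 ≠ (j : ℕ)) :
    indepNum (SimpleGraph.induce
        {A : {A : Finset (Fin m) // A.card = 2} | ∀ i ∈ S, i ∉ A.1}
        (doubleVertexGraph (pathG m))) ≤ (m - 1) ^ 2 / 4 ∧
    (2 ≤ S.card →
      indepNum (SimpleGraph.induce
        {A : {A : Finset (Fin m) // A.card = 2} | ∀ i ∈ S, i ∉ A.1}
        (doubleVertexGraph (pathG m))) < (m - 1) ^ 2 / 4) := by
  constructor
  · obtain ⟨i, hi⟩ := hS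
    refine (indepNum_induce_le_indepNumOn fun A hA => ?_).trans
      (indepNumOn_avoiding_triangle_le (Nat.zero_le i) i.is_lt)
    exact pairCoords_mem_avoiding (hA i hi) (pairCoords_mem_triangle A)
  · intro hcard
    obtain ⟨i, hi, j, hj, hne⟩ := one_lt_card.mp hcard
    wlog hlt : i < j generalizing i j
    · exact this j hj i hi hne.symm (lt_of_le_of_ne (not_lt.mp hlt) hne.symm)
    have hgap : (i : ℕ) + 2 ≤ j := by
      have := hcons i hi j hj
      omega
    refine (indepNum_induce_le_indepNumOn fun A hA => ?_).trans_lt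
      (indepNumOn_avoiding_avoiding_triangle_lt (Nat.zero_le i) hgap j.is_lt)
    exact pairCoords_mem_avoiding (hA j hj)
      (pairCoords_mem_avoiding (hA i hi) (pairCoords_mem_triangle A))

/-- For `m ≥ 4` and a nonempty `S ⊆ {1,…,m}` with no two consecutive integers,
`α(T_m − ∪_{i∈S} R_i) ≤ ⌊(m−1)²/4⌋`, with strict inequality when `|S| ≥ 2`. -/
theorem indepNum_Tm_delete_RS (m : ℕ) (hm : 4 ≤ m) (S : Finset (Fin m))
    (hS : S.Nonempty) (hcons : ∀ i ∈ S, ∀ j ∈ S, (i : ℕ) + 1 ≠ (j : ℕ)) :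
    indepNum (SimpleGraph.induce
        {A : {A : Finset (Fin m) // A.card = 2} | ∀ i ∈ S, i ∉ A.1}
        (doubleVertexGraph (pathG m))) ≤ (m - 1) ^ 2 / 4 ∧
    (2 ≤ S.card →
      indepNum (SimpleGraph.induce
        {A : {A : Finset (Fin m) // A.card = 2} | ∀ i ∈ S, i ∉ A.1}
        (doubleVertexGraph (pathG m))) < (m - 1) ^ 2 / 4) :=
  indepNum_Tm_delete_RS_general m S hS hcons
end
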